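/- arXiv:2601.16485 — 14 statements merged into one kernel-verified Lean document; each statement's English description precedes it below -/
import Mathlib

section
/- Any string of length n over an alphabet contains at most n+1 distinct palindromic substrings (including the empty string). -/
/-!
Appending a letter `a` to `T` creates at most one new palindromic substring, namely the longest
palindromic suffix `L` of `T ++ [a]`: a shorter palindromic suffix of `T ++ [a]` is a suffix of `L`,
hence, reversing, also a proper prefix of `L`, so it already occurs in `T`. Induction on `T`.
-/

namespace List

variable {α : Type*}

def palindromicInfixes (T : List α) : Set (List α) :=
  {P | P <:+: T ∧ P.reverse = P}

theorem palindromicInfixes_finite (T : List α) : (palindromicInfixes T).Finite :=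
  (finite_toSet T.sublists).subset fun _ hP => mem_sublists.2 hP.1.sublist

theorem palindromicInfixes_nil : palindromicInfixes ([] : List α) = {[]} := by
  ext P
  simp +contextual [palindromicInfixes]

theorem IsSuffix.isPrefix_of_reverse_eq {P L : List α} (h : P <:+ L) (hP : P.reverse = P)
    (hL : L.reverse = L) : P <+: L := by
  rwa [← reverse_suffix, hP, hL]

theorem IsSuffix.isInfix_of_reverse_eq_of_length_lt {P L T : List α} {a : α} (hPL : P <:+ L)
    (hP : P.reverse = P) (hL : L.reverse = L) (hlt : P.length < L.length) (hLT : L <:+ T ++ [a]) :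
    P <:+: T := by
  obtain rfl | ⟨t, rfl, htT⟩ := suffix_concat_iff.1 hLT
  · simp at hlt
  obtain rfl | hPt := prefix_concat_iff.1 (hPL.isPrefix_of_reverse_eq hP hL)
  · exact absurd hlt (lt_irrefl _)
  · exact hPt.isInfix.trans htT.isInfix

theorem subsingleton_palindromicInfixes_concat_sdiff (T : List α) (a : α) :
    (palindromicInfixes (T ++ [a]) \ palindromicInfixes T).Subsingleton := by
  have new_suffix : ∀ P ∈ palindromicInfixes (T ++ [a]) \ palindromicInfixes T,
      P <:+ T ++ [a] ∧ P.reverse = P ∧ ¬ P <:+: T := by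
    rintro P ⟨⟨hPT, hP⟩, hPnew⟩
    exact ⟨infix_concat_iff.1 hPT |>.resolve_right fun h => hPnew ⟨h, hP⟩, hP,
      fun h => hPnew ⟨h, hP⟩⟩
  have eq_of_suffix : ∀ P ∈ palindromicInfixes (T ++ [a]) \ palindromicInfixes T,
      ∀ Q ∈ palindromicInfixes (T ++ [a]) \ palindromicInfixes T, P <:+ Q → P = Q := by
    intro P hPnew Q hQnew hPQ
    obtain ⟨-, hP, hPold⟩ := new_suffix P hPnew
    obtain ⟨hQT, hQ, -⟩ := new_suffix Q hQnew
    refine hPQ.sublist.eq_of_length (hPQ.length_le.eq_of_not_lt fun hlt => hPold ?_)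
    exact hPQ.isInfix_of_reverse_eq_of_length_lt hP hQ hlt hQT
  intro P hPnew Q hQnew
  rcases suffix_or_suffix_of_suffix (new_suffix P hPnew).1 (new_suffix Q hQnew).1 with hPQ | hQP
  · exact eq_of_suffix P hPnew Q hQnew hPQ
  · exact (eq_of_suffix Q hQnew P hPnew hQP).symm

theorem ncard_palindromicInfixes_concat_le (T : List α) (a : α) :
    (palindromicInfixes (T ++ [a])).ncard ≤ (palindromicInfixes T).ncard + 1 :=
  calc (palindromicInfixes (T ++ [a])).ncard
      ≤ (palindromicInfixes (T ++ [a]) \ palindromicInfixes T).ncard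
          + (palindromicInfixes T).ncard :=
        Set.ncard_le_ncard_sdiff_add_ncard _ _ (palindromicInfixes_finite T)
    _ ≤ 1 + (palindromicInfixes T).ncard := by
        have h := subsingleton_palindromicInfixes_concat_sdiff T a
        gcongr
        exact (Set.ncard_le_one h.finite).2 h
    _ = (palindromicInfixes T).ncard + 1 := Nat.add_comm _ _

end List

/-- Any string of length `n` contains at most `n + 1` distinct palindromic
substrings (including the empty string). -/
theorem distinct_palindromic_substrings_le {α : Type*} (T : List α) :
    {P : List α | P <:+: T ∧ P.reverse = P}.ncard ≤ T.length + 1 := by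
  change (List.palindromicInfixes T).ncard ≤ T.length + 1
  induction T using List.reverseRecOn with
  | nil => simp [List.palindromicInfixes_nil]
  | append_singleton T a ih =>
    calc (List.palindromicInfixes (T ++ [a])).ncard
        ≤ (List.palindromicInfixes T).ncard + 1 := List.ncard_palindromicInfixes_concat_le T a
      _ ≤ (T ++ [a]).length + 1 := by simpa using ih
end

section
/- In a trie with N edges and L leaves, the number of maximal palindromes is exactly 2N − L. -/
variable {α : Type*}

/-- A trie is modeled as a prefix-closed finite set of strings: each node is
identified with its root-to-node path string.  (Distinctness of sibling edge
labels is then automatic.) -/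
def PrefixClosed (S : Finset (List α)) : Prop := ∀ v ∈ S, ∀ p, p <+: v → p ∈ S

/-- The suffix of `v` of length `k`, i.e. the path string `str(u, v)` from the
ancestor `u` at depth `|v| - k` down to `v`. -/
def sufx (v : List α) (k : ℕ) : List α := v.drop (v.length - k)

def IsPal (P : List α) : Prop := P.reverse = P

/-- The palindromic occurrence `(v, k)` (the length-`k` suffix of node `v`)
cannot be extended one character upward and downward: there is no child
`v ++ [a]` of `v` such that the length-`k + 2` suffix of `v ++ [a]` is a
palindrome (the upward extension requires `k + 1 ≤ |v|`). -/
def NoExt (S : Finset (List α)) (v : List α) (k : ℕ) : Prop :=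
  ∀ a, v ++ [a] ∈ S → k + 1 ≤ v.length →
    ¬ IsPal ((v ++ [a]).drop (v.length - k - 1))


/-!
Send an occurrence `(v, k)` of a palindrome to its center: the node at depth `|v| - ⌊k/2⌋`
together with the parity of `k`. The palindromes around a fixed center form a chain, each one
the unique one-step extension of the previous, and the trie being prefix-closed, exactly one of
them is maximal: the one of largest radius `h` whose node `palNode c h` lies in the trie. So the
maximal palindromes are in bijection with their centers, which are the `N` edges (odd lengths)
and the `N - L` internal non-root nodes (even lengths).
-/

lemma IsPal.exists_eq_append_reverse {s : List α} (hs : IsPal s) :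
    ∃ x m, s = x ++ m ++ x.reverse ∧ m.length ≤ 1 := by
  replace hs := List.Palindrome.of_reverse_eq hs
  induction hs with
  | nil => exact ⟨[], [], rfl, by simp⟩
  | singleton a => exact ⟨[], [a], rfl, by simp⟩
  | cons_concat a _ ih =>
    obtain ⟨x, m, rfl, hm⟩ := ih
    exact ⟨a :: x, m, by simp, hm⟩

lemma isPal_append_reverse (x : List α) {m : List α} (hm : m.length ≤ 1) :
    IsPal (x ++ m ++ x.reverse) := by
  match m, hm with
  | [], _ => simp [IsPal]
  | [_], _ => simp [IsPal]

lemma sufx_length {v : List α} {k : ℕ} (hk : k ≤ v.length) : (sufx v k).length = k := by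
  simp [sufx]; omega

lemma sufx_append_of_length (w s : List α) : sufx (w ++ s) s.length = s := by
  simp [sufx]

lemma drop_append_singleton_eq_sufx (v : List α) (a : α) (k : ℕ) :
    (v ++ [a]).drop (v.length - k - 1) = sufx (v ++ [a]) (k + 2) := by
  simp only [sufx, List.length_append, List.length_singleton]
  congr 1
  omega

/-- The center of the palindrome `sufx v k`, for `p = (v, k)`: the node `u` in its middle,
encoded `(u, 0)`, when `k` is even; the edge entering `u` from above, encoded `(u, 1)`,
when `k` is odd. -/
def palCenter (p : List α × ℕ) : List α × ℕ := (p.1.take (p.1.length - p.2 / 2), p.2 % 2)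

/-- For `c = (u, b)`, the node `u ++ y` where `y` reverses the `h` letters of `u` just above
the center; its suffix of length `2h + b` is the palindrome of radius `h` centered at `c`. -/
def palNode (c : List α × ℕ) (h : ℕ) : List α :=
  c.1 ++ (c.1.take (c.1.length - c.2)).reverse.take h

lemma palCenter_append (u t : List α) {b : ℕ} (hb : b ≤ 1) :
    palCenter (u ++ t, 2 * t.length + b) = (u, b) := by
  simp only [palCenter, List.length_append, Prod.mk.injEq]
  constructor
  · rw [show u.length + t.length - (2 * t.length + b) / 2 = u.length by omega,
      List.take_left]
  · omega

lemma palNode_append (w x m : List α) :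
    palNode (w ++ x ++ m, m.length) x.length = w ++ x ++ m ++ x.reverse := by
  rw [palNode, List.take_left' (l₁ := w ++ x) (by simp; omega), List.reverse_append,
    List.take_left' (by simp)]

lemma palNode_zero (c : List α × ℕ) : palNode c 0 = c.1 := by
  simp [palNode]

lemma length_palNode {c : List α × ℕ} {h : ℕ} (hh : h ≤ c.1.length - c.2) :
    (palNode c h).length = c.1.length + h := by
  simp [palNode]; omega

lemma palNode_prefix_palNode (c : List α × ℕ) {h h' : ℕ} (hle : h ≤ h') :
    palNode c h <+: palNode c h' :=
  (List.prefix_append_right_inj _).mpr (List.take_prefix_take_left hle)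

lemma exists_palNode_add_one {c : List α × ℕ} {h : ℕ} (hh : h < c.1.length - c.2) :
    ∃ a, palNode c (h + 1) = palNode c h ++ [a] := by
  have hlt : h < (c.1.take (c.1.length - c.2)).reverse.length := by simp; omega
  refine ⟨(c.1.take (c.1.length - c.2)).reverse[h], ?_⟩
  rw [palNode, List.take_add_one, List.getElem?_eq_getElem hlt, Option.toList_some,
    ← List.append_assoc, palNode]

lemma exists_eq_append_append {c : List α × ℕ} {h : ℕ} (hb : c.2 ≤ c.1.length)
    (hh : h ≤ c.1.length - c.2) : ∃ w x m, c = (w ++ x ++ m, m.length) ∧ x.length = h := by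
  obtain ⟨u, b⟩ := c
  dsimp only at hb hh
  set G := u.take (u.length - b)
  refine ⟨G.take (G.length - h), G.drop (G.length - h), u.drop (u.length - b), ?_, ?_⟩
  · simp only [List.take_append_drop, G, Prod.mk.injEq, List.length_drop, true_and]
    omega
  · simp [G]; omega

lemma isPal_sufx_palNode {c : List α × ℕ} {h : ℕ} (hb1 : c.2 ≤ 1) (hb : c.2 ≤ c.1.length)
    (hh : h ≤ c.1.length - c.2) : IsPal (sufx (palNode c h) (2 * h + c.2)) := by
  obtain ⟨w, x, m, rfl, rfl⟩ := exists_eq_append_append hb hh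
  rw [palNode_append, show w ++ x ++ m ++ x.reverse = w ++ (x ++ m ++ x.reverse) by simp,
    show 2 * x.length + m.length = (x ++ m ++ x.reverse).length by simp; omega,
    sufx_append_of_length]
  exact isPal_append_reverse x hb1

lemma palNode_palCenter {v : List α} {k : ℕ} (hk : k ≤ v.length) (hp : IsPal (sufx v k)) :
    palNode (palCenter (v, k)) (k / 2) = v := by
  obtain ⟨x, m, hs, hm⟩ := hp.exists_eq_append_reverse
  have hsl : k = 2 * x.reverse.length + m.length := by
    have := sufx_length hk
    rw [hs] at this
    simp only [List.length_append, List.length_reverse] at this ⊢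
    omega
  have hv : v = v.take (v.length - k) ++ x ++ m ++ x.reverse := by
    conv_lhs => rw [← List.take_append_drop (v.length - k) v]
    rw [← sufx, hs]
    simp only [List.append_assoc]
  generalize v.take (v.length - k) = w at hv
  subst hv hsl
  rw [palCenter_append _ _ hm, List.length_reverse,
    show (2 * x.length + m.length) / 2 = x.length by omega, palNode_append]

lemma palCenter_palNode_append {c : List α × ℕ} {h : ℕ} (hb1 : c.2 ≤ 1)
    (hh : h ≤ c.1.length - c.2) (t : List α) :
    palCenter (palNode c h ++ t, 2 * (h + t.length) + c.2) = c := by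
  have harm : ((c.1.take (c.1.length - c.2)).reverse.take h ++ t).length = h + t.length := by
    simp; omega
  rw [← harm, palNode, List.append_assoc]
  exact palCenter_append _ _ hb1

lemma noExt_palNode_iff {S : Finset (List α)} {c : List α × ℕ} {h : ℕ} (hb1 : c.2 ≤ 1)
    (hb : c.2 ≤ c.1.length) (hh : h ≤ c.1.length - c.2) :
    NoExt S (palNode c h) (2 * h + c.2) ↔ (h < c.1.length - c.2 → palNode c (h + 1) ∉ S) := by
  have hlen := length_palNode hh
  constructor
  · intro hne hlt hmem
    obtain ⟨a, ha⟩ := exists_palNode_add_one hlt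
    refine hne a (ha ▸ hmem) (by omega) ?_
    rw [drop_append_singleton_eq_sufx, ← ha, show 2 * h + c.2 + 2 = 2 * (h + 1) + c.2 by ring]
    exact isPal_sufx_palNode hb1 hb hlt
  · intro hmax a ha hlt hpal
    rw [drop_append_singleton_eq_sufx] at hpal
    have hv := palNode_palCenter (by simp; omega) hpal
    rw [show 2 * h + c.2 + 2 = 2 * (h + [a].length) + c.2 by simp; ring,
      palCenter_palNode_append hb1 hh, show (2 * (h + [a].length) + c.2) / 2 = h + 1 by simp; omega]
      at hv
    exact hmax (by omega) (hv ▸ ha)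

def IsMaximalPal (S : Finset (List α)) (p : List α × ℕ) : Prop :=
  p.1 ∈ S ∧ p.2 ≤ p.1.length ∧ IsPal (sufx p.1 p.2) ∧ NoExt S p.1 p.2 ∧
    (p.2 = 0 → p.1 ≠ [] ∧ ∃ a, p.1 ++ [a] ∈ S)

def palCenters (S : Finset (List α)) : Set (List α × ℕ) :=
  {c | c.1 ∈ S ∧ c.1 ≠ [] ∧ c.2 ≤ 1 ∧ (c.2 = 0 → ∃ a, c.1 ++ [a] ∈ S)}

open Classical in
noncomputable def maxRadius (S : Finset (List α)) (c : List α × ℕ) : ℕ :=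
  Nat.findGreatest (fun h => palNode c h ∈ S) (c.1.length - c.2)

noncomputable def maxPalAt (S : Finset (List α)) (c : List α × ℕ) : List α × ℕ :=
  (palNode c (maxRadius S c), 2 * maxRadius S c + c.2)

section Trie

variable {S : Finset (List α)}

lemma palCenter_mem_palCenters (hpc : PrefixClosed S) {p : List α × ℕ} (hp : IsMaximalPal S p) :
    palCenter p ∈ palCenters S := by
  obtain ⟨v, k⟩ := p
  obtain ⟨hv, hk, hpal, -, h0⟩ := hp
  dsimp only at hv hk hpal h0
  have hcl : (palCenter (v, k)).1.length = v.length - k / 2 := by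
    simp only [palCenter, List.length_take]; omega
  refine ⟨hpc v hv _ (List.take_prefix _ _), ?_, show k % 2 ≤ 1 by omega, fun hb => ?_⟩
  · rcases Nat.eq_zero_or_pos k with rfl | hpos
    · simpa [palCenter] using (h0 rfl).1
    · exact List.ne_nil_of_length_pos (by omega)
  · have hb : k % 2 = 0 := hb
    rcases Nat.eq_zero_or_pos k with rfl | hpos
    · simpa [palCenter] using (h0 rfl).2
    · obtain ⟨a, ha⟩ := exists_palNode_add_one (c := palCenter (v, k)) (h := 0)
        (by rw [hcl, show (palCenter (v, k)).2 = k % 2 from rfl]; omega)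
      have hpre := palNode_prefix_palNode (palCenter (v, k)) (show 0 + 1 ≤ k / 2 by omega)
      rw [ha, palNode_zero, palNode_palCenter hk hpal] at hpre
      exact ⟨a, hpc v hv _ hpre⟩

lemma maxRadius_palCenter (hpc : PrefixClosed S) {p : List α × ℕ} (hp : IsMaximalPal S p) :
    maxRadius S (palCenter p) = p.2 / 2 := by
  classical
  obtain ⟨v, k⟩ := p
  obtain ⟨hv, hk, hpal, hne, -⟩ := hp
  dsimp only at hv hk hpal hne ⊢
  have hnode := palNode_palCenter hk hpal
  have hcl : (palCenter (v, k)).1.length = v.length - k / 2 := by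
    simp only [palCenter, List.length_take]; omega
  have hc2 : (palCenter (v, k)).2 = k % 2 := rfl
  have hbnd : k / 2 ≤ (palCenter (v, k)).1.length - (palCenter (v, k)).2 := by omega
  have hne' :
      NoExt S (palNode (palCenter (v, k)) (k / 2)) (2 * (k / 2) + (palCenter (v, k)).2) := by
    rwa [hnode, hc2, Nat.div_add_mod]
  have hmax := (noExt_palNode_iff (by omega) (by omega) hbnd).mp hne'
  rw [maxRadius, Nat.findGreatest_eq_iff]
  refine ⟨hbnd, fun _ => by rw [hnode]; exact hv, fun n hlt hn hmem => ?_⟩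
  exact hmax (by omega) (hpc _ hmem _ (palNode_prefix_palNode _ hlt))

lemma isMaximalPal_maxPalAt {c : List α × ℕ} (hc : c ∈ palCenters S) :
    IsMaximalPal S (maxPalAt S c) := by
  classical
  obtain ⟨hu, hne, hb1, hchild⟩ := hc
  have hb : c.2 ≤ c.1.length := by have := List.length_pos_iff.mpr hne; omega
  have hrle : maxRadius S c ≤ c.1.length - c.2 := Nat.findGreatest_le _
  have hmem : palNode c (maxRadius S c) ∈ S :=
    Nat.findGreatest_spec (P := fun h => palNode c h ∈ S) (Nat.zero_le _) (by rwa [palNode_zero])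
  refine ⟨hmem, ?_, isPal_sufx_palNode hb1 hb hrle,
    (noExt_palNode_iff hb1 hb hrle).mpr fun hlt =>
      Nat.findGreatest_is_greatest (Nat.lt_succ_self _) hlt,
    fun h0 => ?_⟩
  · show 2 * maxRadius S c + c.2 ≤ (palNode c (maxRadius S c)).length
    rw [length_palNode hrle]; omega
  · have h0 : 2 * maxRadius S c + c.2 = 0 := h0
    show palNode c (maxRadius S c) ≠ [] ∧ ∃ a, palNode c (maxRadius S c) ++ [a] ∈ S
    rw [show maxRadius S c = 0 by omega, palNode_zero]
    exact ⟨hne, hchild (by omega)⟩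

lemma maxPalAt_palCenter (hpc : PrefixClosed S) {p : List α × ℕ} (hp : IsMaximalPal S p) :
    maxPalAt S (palCenter p) = p := by
  obtain ⟨v, k⟩ := p
  rw [maxPalAt, maxRadius_palCenter hpc hp, palNode_palCenter hp.2.1 hp.2.2.1]
  simp only [palCenter, Prod.mk.injEq, true_and]
  omega

lemma palCenter_maxPalAt {c : List α × ℕ} (hc : c ∈ palCenters S) :
    palCenter (maxPalAt S c) = c := by
  classical
  have hrle : maxRadius S c ≤ c.1.length - c.2 := Nat.findGreatest_le _
  rw [maxPalAt]
  simpa using palCenter_palNode_append hc.2.2.1 hrle []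

lemma bijOn_palCenter (hpc : PrefixClosed S) :
    Set.BijOn palCenter {p | IsMaximalPal S p} (palCenters S) :=
  Set.InvOn.bijOn (f' := maxPalAt S)
    ⟨fun _ hp => maxPalAt_palCenter hpc hp, fun _ hc => palCenter_maxPalAt hc⟩
    (fun _ hp => palCenter_mem_palCenters hpc hp) (fun _ hc => isMaximalPal_maxPalAt hc)

lemma eq_singleton_nil_of_forall_not_mem (hroot : ([] : List α) ∈ S) (hpc : PrefixClosed S)
    (hleaf : ∀ a, [a] ∉ S) : S = {[]} := by
  refine Finset.eq_singleton_iff_unique_mem.mpr ⟨hroot, fun v hv => ?_⟩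
  rcases v with _ | ⟨a, t⟩
  · rfl
  · exact absurd (hpc _ hv [a] ⟨t, rfl⟩) (hleaf a)

lemma ncard_palCenters (hroot : ([] : List α) ∈ S) (hpc : PrefixClosed S) :
    (palCenters S).ncard =
      2 * (S.card - 1) - {v : List α | v ∈ S ∧ ∀ a, v ++ [a] ∉ S}.ncard := by
  by_cases hleaf : ∃ a, [a] ∈ S
  swap
  · obtain rfl := eq_singleton_nil_of_forall_not_mem hroot hpc (not_exists.mp hleaf)
    have : palCenters ({[]} : Finset (List α)) = ∅ :=
      Set.eq_empty_of_forall_notMem fun c hc => hc.2.1 (Finset.mem_singleton.mp hc.1)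
    simp [this]
  obtain ⟨a, ha⟩ := hleaf
  set A := {u : List α | u ∈ S ∧ u ≠ []}
  set L := {v : List α | v ∈ S ∧ ∀ a, v ++ [a] ∉ S}
  have hcenters : palCenters S = (fun u => (u, 1)) '' A ∪ (fun u => (u, 0)) '' (A \ L) := by
    ext ⟨u, b⟩
    rcases b with _ | _ | b <;> simp +contextual [palCenters, A, L, and_assoc]
  have hdisj : Disjoint ((fun u => (u, 1)) '' A) ((fun u => (u, 0)) '' (A \ L)) := by
    refine Set.disjoint_left.mpr ?_
    rintro _ ⟨u, -, rfl⟩ ⟨w, -, h⟩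
    simp at h
  have hA : A.ncard = S.card - 1 := by
    rw [show A = (S : Set (List α)) \ {[]} by ext; simp [A],
      Set.ncard_sdiff_singleton_of_mem hroot, Set.ncard_coe_finset]
  have hLA : L ⊆ A := fun v hv => ⟨hv.1, by rintro rfl; exact hv.2 a ha⟩
  have hAfin : A.Finite := S.finite_toSet.subset fun _ h => h.1
  have hLle : L.ncard ≤ A.ncard := Set.ncard_le_ncard hLA hAfin
  rw [hcenters, Set.ncard_union_eq hdisj,
    Set.ncard_image_of_injective _ (Prod.mk_left_injective 1),
    Set.ncard_image_of_injective _ (Prod.mk_left_injective 0),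
    Set.ncard_sdiff hLA (hAfin.subset hLA)]
  omega

end Trie

/-- In a trie with `N` edges and `L` leaves there are exactly `2N - L` maximal
palindromes (nonempty non-extensible palindromic path strings, together with
the maximal empty palindromes centered at internal non-root nodes). -/
theorem count_maximal_palindromes_in_trie (S : Finset (List α))
    (hroot : ([] : List α) ∈ S) (hpc : PrefixClosed S) :
    {p : List α × ℕ | p.1 ∈ S ∧ p.2 ≤ p.1.length ∧ IsPal (sufx p.1 p.2) ∧
        NoExt S p.1 p.2 ∧
        (p.2 = 0 → p.1 ≠ [] ∧ ∃ a, p.1 ++ [a] ∈ S)}.ncard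
      = 2 * (S.card - 1) - {v : List α | v ∈ S ∧ ∀ a, v ++ [a] ∉ S}.ncard :=
  (bijOn_palCenter hpc).ncard_eq.trans (ncard_palCenters hroot hpc)
end

section
/- In a trie with N edges, the number of distinct palindromic path strings (including the empty string) is at most N + 1. -/
variable {α : Type*}

/-- In a trie with `N` edges (hence `N + 1` nodes), the number of distinct
palindromic path strings (including the empty string) is at most `N + 1`.
Path strings `str(u, v)` are exactly the suffixes of node strings `v ∈ S`. -/
theorem distinct_palindromes_in_trie_le (S : Finset (List α))
    (hroot : ([] : List α) ∈ S) (hpc : PrefixClosed S) :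
    {P : List α | P.reverse = P ∧ ∃ v ∈ S, P <:+ v}.ncard ≤ (S.card - 1) + 1 := by
  classical
  set Pal := {P : List α | P.reverse = P ∧ ∃ v ∈ S, P <:+ v} with hPal
  -- choose for each palindrome a node of minimal length having it as a suffix
  have key : ∀ P : List α, ∃ v : List α, P ∈ Pal →
      v ∈ S ∧ P <:+ v ∧ ∀ w ∈ S, P <:+ w → v.length ≤ w.length := by
    intro P
    by_cases hP : P ∈ Pal
    · obtain ⟨-, u, hu, hsuf⟩ := hP
      obtain ⟨m, hm, hmin⟩ :=
        (S.filter (fun w => P <:+ w)).exists_min_image List.length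
          ⟨u, by simp [hu, hsuf]⟩
      simp only [Finset.mem_filter] at hm
      refine ⟨m, fun _ => ⟨hm.1, hm.2, fun w hw hwp => hmin w (by simp [hw, hwp])⟩⟩
    · exact ⟨[], fun h => absurd h hP⟩
  choose f hf using key
  have hsub : ∀ P ∈ Pal, f P ∈ (S : Set (List α)) := fun P hP => (hf P hP).1
  have hinj : Set.InjOn f Pal := by
    -- generic claim: if P, Q ∈ Pal with f P = f Q and |P| < |Q| then contradiction
    have main : ∀ P ∈ Pal, ∀ Q ∈ Pal, f P = f Q → P.length < Q.length → False := by
      intro P hP Q hQ hfeq hlen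
      obtain ⟨hPS, hPsuf, hPmin⟩ := hf P hP
      obtain ⟨hQS, hQsuf, _⟩ := hf Q hQ
      rw [hfeq] at hPsuf hPmin
      set v := f Q with hv
      -- P and Q are suffixes of v, |P| ≤ |Q|, so P <:+ Q
      have hPQ : P <:+ Q := List.suffix_of_suffix_length_le hPsuf hQsuf hlen.le
      -- since both are palindromes, P <+: Q
      have hPpal : P.reverse = P := hP.1
      have hQpal : Q.reverse = Q := hQ.1
      have hPpre : P <+: Q := by
        have := hPQ.reverse
        rwa [hPpal, hQpal] at this
      -- write v = w ++ Q; then w ++ P is a shorter node with suffix P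
      obtain ⟨w, hw⟩ := hQsuf
      obtain ⟨t, ht⟩ := hPpre
      have hmem : w ++ P ∈ S := by
        refine hpc v hQS (w ++ P) ?_
        exact ⟨t, by rw [← hw, ← ht, List.append_assoc]⟩
      have := hPmin (w ++ P) hmem ⟨w, rfl⟩
      rw [← hw, List.length_append, List.length_append] at this
      omega
    intro P hP Q hQ hfeq
    rcases lt_trichotomy P.length Q.length with h | h | h
    · exact absurd (main P hP Q hQ hfeq h) (by simp)
    · obtain ⟨hPS, hPsuf, _⟩ := hf P hP
      obtain ⟨_, hQsuf, _⟩ := hf Q hQ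
      rw [hfeq] at hPsuf
      exact (List.suffix_of_suffix_length_le hPsuf hQsuf h.le).eq_of_length h
    · exact absurd (main Q hQ P hP hfeq.symm h) (by simp)
  have hle : Pal.ncard ≤ (S : Set (List α)).ncard :=
    Set.ncard_le_ncard_of_injOn f hsub hinj S.finite_toSet
  rw [Set.ncard_coe_finset] at hle
  have hpos : 0 < S.card := Finset.card_pos.mpr ⟨[], hroot⟩
  omega
end

section
/- When one character is appended to a string T, at most one new distinct palindromic substring is created: if Ta contains a palindrome not occurring in T, it is the longest palindromic suffix of Ta, and it is the unique such new palindrome. -/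
lemma suffix_of_new {α : Type*} {T P : List α} {a : α}
    (h : P <:+: T ++ [a]) (hn : ¬ P <:+: T) : P <:+ T ++ [a] := by
  obtain ⟨s, t, hst⟩ := h
  rcases t.eq_nil_or_concat with rfl | ⟨t', b, rfl⟩
  · exact ⟨s, by simpa using hst⟩
  · exfalso
    apply hn
    have : (s ++ (P ++ t')) ++ [b] = T ++ [a] := by simpa using hst
    have := (List.append_inj' this rfl).1
    exact ⟨s, t', by simp [this]⟩

lemma longest_of_new {α : Type*} {T P Q : List α} {a : α}
    (hP : P <:+ T ++ [a]) (hPpal : P.reverse = P) (hn : ¬ P <:+: T)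
    (hQ : Q <:+ T ++ [a]) (hQpal : Q.reverse = Q) : Q.length ≤ P.length := by
  by_contra hlt
  push_neg at hlt
  have hPQ : P <:+ Q := by
    rcases List.suffix_or_suffix_of_suffix hP hQ with h | h
    · exact h
    · exact absurd (h.length_le) (by omega)
  obtain ⟨u, rfl⟩ := hPQ
  have hu : u ≠ [] := by rintro rfl; simp at hlt
  -- Q = u ++ P = (u ++ P).reverse = P ++ u.reverse, so P prefix of Q
  have hQ2 : u ++ P = P ++ u.reverse := by
    conv_lhs => rw [← hQpal]
    simp [hPpal]
  obtain ⟨s, hs⟩ := hQ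
  rcases (u.reverse).eq_nil_or_concat with hnil | ⟨v, c, hvc⟩
  · simp at hnil; exact hu hnil
  · apply hn
    have : (s ++ P ++ v) ++ [c] = T ++ [a] := by
      rw [← hs, hQ2, hvc]; simp
    have := (List.append_inj' this rfl).1
    exact ⟨s, v, by simpa using this⟩

/-- When a character `a` is appended to `T`, at most one new distinct
palindromic substring is created, and if one is created it is the longest
palindromic suffix of `T ++ [a]`. -/
theorem at_most_one_new_palindrome {α : Type*} (T : List α) (a : α) :
    ({P : List α | P <:+: T ++ [a] ∧ P.reverse = P} \
      {P : List α | P <:+: T ∧ P.reverse = P}).ncard ≤ 1 ∧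
    ∀ P ∈ ({P : List α | P <:+: T ++ [a] ∧ P.reverse = P} \
      {P : List α | P <:+: T ∧ P.reverse = P}),
      P <:+ T ++ [a] ∧
      ∀ Q : List α, Q <:+ T ++ [a] → Q.reverse = Q → Q.length ≤ P.length := by
  have key : ∀ P ∈ ({P : List α | P <:+: T ++ [a] ∧ P.reverse = P} \
      {P : List α | P <:+: T ∧ P.reverse = P}),
      P <:+ T ++ [a] ∧
      ∀ Q : List α, Q <:+ T ++ [a] → Q.reverse = Q → Q.length ≤ P.length := by
    rintro P ⟨⟨hinf, hpal⟩, hnot⟩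
    have hn : ¬ P <:+: T := fun h => hnot ⟨h, hpal⟩
    have hsuf := suffix_of_new hinf hn
    exact ⟨hsuf, fun Q hQ hQpal => longest_of_new hsuf hpal hn hQ hQpal⟩
  have hsub : ({P : List α | P <:+: T ++ [a] ∧ P.reverse = P} \
      {P : List α | P <:+: T ∧ P.reverse = P}).Subsingleton := by
    rintro P hP Q hQ
    obtain ⟨hPs, hPmax⟩ := key P hP
    obtain ⟨hQs, hQmax⟩ := key Q hQ
    have hPpal := hP.1.2
    have hQpal := hQ.1.2
    have hlen : P.length = Q.length :=
      le_antisymm (hQmax P hPs hPpal) (hPmax Q hQs hQpal)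
    rcases List.suffix_or_suffix_of_suffix hPs hQs with h | h
    · exact h.eq_of_length hlen
    · exact (h.eq_of_length hlen.symm).symm
  exact ⟨(Set.ncard_le_one hsub.finite).mpr fun x hx y hy => hsub hx hy, key⟩
end

section
/- Let s₁ < s₂ < … < s_g be the lengths of all maximal palindromes of a string T ending at position i, and let d_j = s_j − s_{j−1} (with d₁ = s₁). Then for all 1 ≤ j < g, d_{j+1} ≥ d_j. -/
variable {α : Type*}

/-- The set of lengths of maximal palindromes of `T` ending at (1-indexed)
position `i`: nonempty palindromic substrings `T[ℓ..i]` with `ℓ = 1`, or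
`i = |T|`, or `T[ℓ-1] ≠ T[i+1]` (0-indexed: `T[i-k-1]? ≠ T[i]?`). -/
def MPE (T : List α) (i : ℕ) : Set ℕ :=
  {k | 0 < k ∧ k ≤ i ∧ IsPal ((T.take i).drop (i - k)) ∧
    (k = i ∨ i = T.length ∨ T[i - k - 1]? ≠ T[i]?)}

/-- Consecutive differences of the (0-indexed) increasing sequence `s`, with
`diffs s 0 = s 0`. -/
def diffs (s : ℕ → ℕ) (j : ℕ) : ℕ := if j = 0 then s 0 else s j - s (j - 1)

lemma isPal_iff_index {L : List α} :
    IsPal L ↔ ∀ t < L.length, L[t]? = L[L.length - 1 - t]? := by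
  constructor
  · intro h t ht
    conv_lhs => rw [← h]
    rw [List.getElem?_reverse ht]
  · intro h
    apply List.ext_getElem?
    intro n
    by_cases hn : n < L.length
    · rw [List.getElem?_reverse hn]
      have := h (L.length - 1 - n) (by omega)
      have harith : L.length - 1 - (L.length - 1 - n) = n := by omega
      rw [harith] at this
      exact this
    · rw [List.getElem?_eq_none (by simpa using le_of_not_gt hn),
        List.getElem?_eq_none (le_of_not_gt hn)]

lemma pal_index {T : List α} {i k : ℕ} (hk : k ≤ i) (hi : i ≤ T.length) :
    IsPal ((T.take i).drop (i - k)) ↔ ∀ t < k, T[i - k + t]? = T[i - 1 - t]? := by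
  have hlen : ((T.take i).drop (i - k)).length = k := by
    simp [List.length_drop, List.length_take]; omega
  have hget : ∀ t < k, ((T.take i).drop (i - k))[t]? = T[i - k + t]? := by
    intro t ht
    rw [List.getElem?_drop, List.getElem?_take, if_pos (by omega)]
  rw [isPal_iff_index, hlen]
  constructor
  · intro h t ht
    have := h t ht
    rw [hget t ht, hget (k - 1 - t) (by omega)] at this
    have harith : i - k + (k - 1 - t) = i - 1 - t := by omega
    rwa [harith] at this
  · intro h t ht
    rw [hget t ht, hget (k - 1 - t) (by omega)]
    have harith : i - k + (k - 1 - t) = i - 1 - t := by omega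
    rw [harith]
    exact h t ht

/-- If `s 0 < s 1 < … < s (g-1)` enumerates the lengths of all maximal
palindromes of `T` ending at position `i`, then the difference sequence is
nondecreasing. -/
theorem diffs_monotone (T : List α) (i : ℕ) (hi : 1 ≤ i) (hiT : i ≤ T.length)
    (s : ℕ → ℕ) (g : ℕ)
    (hmono : ∀ j j', j < j' → j' < g → s j < s j')
    (hrange : ∀ k, (∃ j < g, s j = k) ↔ k ∈ MPE T i) :
    ∀ j, j + 1 < g → diffs s j ≤ diffs s (j + 1) := by
  intro j hj
  by_contra hlt
  push_neg at hlt
  have huv : s j < s (j + 1) := hmono j (j + 1) (by omega) hj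
  have hmemu : s j ∈ MPE T i := (hrange (s j)).1 ⟨j, by omega, rfl⟩
  have hmemv : s (j + 1) ∈ MPE T i := (hrange (s (j + 1))).1 ⟨j + 1, hj, rfl⟩
  obtain ⟨hu0, hui, hpalu, hmaxu⟩ := hmemu
  obtain ⟨hv0, hvi, hpalv, -⟩ := hmemv
  set u := s j with hu
  set v := s (j + 1) with hv
  set p := v - u with hp
  have hp_pos : 0 < p := by omega
  have hdv : diffs s (j + 1) = p := by simp [diffs, ← hu, ← hv, ← hp]
  -- w = previous value (0 if j = 0)
  set w : ℕ := if j = 0 then 0 else s (j - 1) with hwdef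
  have hdu : diffs s j = u - w := by
    rcases Nat.eq_zero_or_pos j with h0 | h0
    · subst h0; simp [diffs, hwdef, ← hu]
    · simp [diffs, hwdef, Nat.pos_iff_ne_zero.mp h0, ← hu]
  rw [hdu, hdv] at hlt
  have hw_lt : w < u := by
    rcases Nat.eq_zero_or_pos j with h0 | h0
    · simp only [hwdef, if_pos h0]; omega
    · have := hmono (j - 1) j (by omega) (by omega)
      simp only [hwdef, if_neg (Nat.pos_iff_ne_zero.mp h0)]
      omega
  have hpu : p < u := by omega
  have hne : ∀ j' < g, s j' ≠ u - p := by
    intro j' hj' hs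
    have hcases : s j' ≤ w ∨ u ≤ s j' := by
      rcases lt_trichotomy j' j with h | h | h
      · left
        have h1 : j ≠ 0 := by omega
        rw [hwdef, if_neg h1]
        rcases eq_or_lt_of_le (by omega : j' ≤ j - 1) with he | h2
        · rw [he]
        · exact le_of_lt (hmono j' (j - 1) h2 (by omega))
      · right; rw [hu, h]
      · right; exact le_of_lt (hmono j j' h hj')
    omega
  have hnm : u - p ∉ MPE T i := by
    intro h
    obtain ⟨j', hj', hs⟩ := (hrange (u - p)).2 h
    exact hne j' hj' hs
  -- index form of palindromes
  have Palu : ∀ t < u, T[i - u + t]? = T[i - 1 - t]? := (pal_index hui hiT).1 hpalu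
  have Palv : ∀ t < v, T[i - v + t]? = T[i - 1 - t]? := (pal_index hvi hiT).1 hpalv
  -- periodicity
  have hper : ∀ t < u, T[i - 1 - t]? = T[i - 1 - (t + p)]? := by
    intro t ht
    have h1 := Palu t ht
    have h2 := Palv (t + p) (by omega)
    have harith : i - v + (t + p) = i - u + t := by omega
    rw [harith] at h2
    exact h1.symm.trans h2
  -- the suffix of length u - p is a palindrome
  have hpal' : IsPal ((T.take i).drop (i - (u - p))) := by
    rw [pal_index (by omega) hiT]
    intro t ht
    have h1 := Palu (t + p) (by omega)
    have harith : i - (u - p) + t = i - u + (t + p) := by omega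
    rw [harith, h1]
    exact (hper t (by omega)).symm
  -- u - p is not maximal
  have hnd : ¬(u - p = i ∨ i = T.length ∨ T[i - (u - p) - 1]? ≠ T[i]?) := by
    intro h
    exact hnm ⟨by omega, by omega, hpal', h⟩
  push_neg at hnd
  obtain ⟨-, hiTne, hch⟩ := hnd
  -- maximality of u gives the character condition
  have hchu : T[i - u - 1]? ≠ T[i]? := by
    rcases hmaxu with h | h | h
    · omega
    · exact absurd h hiTne
    · exact h
  -- contradiction via periodicity
  have hfin := hper (u - p) (by omega)
  have h1 : i - 1 - (u - p) = i - (u - p) - 1 := by omega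
  have h2 : i - 1 - (u - p + p) = i - u - 1 := by omega
  rw [h1, h2] at hfin
  exact hchu (hfin.symm.trans hch)
end

section
/- Let s₁ < … < s_g be the lengths of all maximal palindromes of T ending at position i with differences d_j = s_j − s_{j−1} (d₁ = s₁). For any 1 < j < g, if d_{j+1} ≠ d_j then d_{j+1} ≥ d_j + d_{j−1}. -/
/-!
If `y ++ z` and `z` are both palindromes then `y ++ z = z ++ y.reverse`, so a palindrome with a
palindromic suffix of length `B` is periodic with period `e = C - B`. When `e < B`, this
reflects the suffix of length `B` inside the one of length `C`: the suffix of length `B - e`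
is again a palindrome and is preceded by the same character as the suffix of length `B`, so
it is maximal as soon as the suffix of length `B` is. Hence the set of maximal palindrome
lengths is closed under `(B, C) ↦ 2B - C`. For consecutive lengths `A < B < C` this gives
first `C - B > B - A` (otherwise `2B - C` would fall strictly between `A` and `B`), and then,
if `C - B < B`, that `2B - C` lies at or below the length preceding `A`.
-/

variable {α : Type*}

namespace IsPal

variable {y z : List α}

theorem append_eq_append_reverse (hyz : IsPal (y ++ z)) (hz : IsPal z) :
    y ++ z = z ++ y.reverse :=
  calc y ++ z = (y ++ z).reverse := hyz.symm
    _ = z ++ y.reverse := by rw [List.reverse_append, hz]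

theorem drop_length (hyz : IsPal (y ++ z)) (hz : IsPal z) (hlen : y.length ≤ z.length) :
    IsPal (z.drop y.length) := by
  set w := z.drop y.length
  have hcomm := hyz.append_eq_append_reverse hz
  have hzyw : z = y ++ w := by
    have hy : y = z.take y.length := by
      simpa [List.take_append_of_le_length hlen] using congrArg (List.take y.length) hcomm
    rw [← List.take_append_drop y.length z, ← hy]
  have hyw : y ++ w = w ++ y.reverse := by
    rw [hzyw, List.append_assoc] at hcomm
    exact List.append_cancel_left hcomm
  have hrev : w.reverse ++ y.reverse = w ++ y.reverse := by
    rw [← List.reverse_append, ← hzyw, hz, hzyw, hyw]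
  exact List.append_cancel_right hrev

theorem getElem?_add_length (hyz : IsPal (y ++ z)) (hz : IsPal z) {m : ℕ} (hm : m < z.length) :
    (y ++ z)[m + y.length]? = (y ++ z)[m]? := by
  rw [List.getElem?_append_right (by omega), Nat.add_sub_cancel,
    hyz.append_eq_append_reverse hz, List.getElem?_append_left hm]

end IsPal

section Suffixes

variable {T : List α} {i k C : ℕ}

theorem drop_sub_drop_sub (P : List α) {n : ℕ} (hkC : k ≤ C) (hC : C ≤ n) :
    (P.drop (n - C)).drop (C - k) = P.drop (n - k) := by
  rw [List.drop_drop]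
  congr 1
  omega

theorem length_drop_sub_take (hC : C ≤ i) (hiT : i ≤ T.length) :
    ((T.take i).drop (i - C)).length = C := by
  simp only [List.length_drop, List.length_take]
  omega

theorem getElem?_drop_sub_take {m : ℕ} (hm : m < C) (hC : C ≤ i) :
    ((T.take i).drop (i - C))[m]? = T[i - C + m]? := by
  rw [List.getElem?_drop, List.getElem?_take_of_lt (by omega)]

theorem getElem?_ne_of_mem_MPE (hk : k ∈ MPE T i) (hki : k < i) : T[i - k - 1]? ≠ T[i]? := by
  obtain ⟨-, -, -, hk_eq | hi_len | hne⟩ := hk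
  · omega
  · rw [List.getElem?_eq_none (l := T) (i := i) (by omega), List.getElem?_eq_getElem (by omega)]
    exact Option.some_ne_none _
  · exact hne

theorem sub_sub_mem_MPE (hiT : i ≤ T.length) {B : ℕ} (hB : B ∈ MPE T i) (hC : C ∈ MPE T i)
    (hBC : B < C) (hCB : C - B < B) : B - (C - B) ∈ MPE T i := by
  obtain ⟨-, hCi, hCpal, -⟩ := hC
  have hBblock := getElem?_ne_of_mem_MPE hB (by omega)
  obtain ⟨-, -, hBpal, -⟩ := hB
  set x := (T.take i).drop (i - C)
  set y := x.take (C - B)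
  set z := x.drop (C - B)
  have hz : z = (T.take i).drop (i - B) := drop_sub_drop_sub _ hBC.le hCi
  have hx : x = y ++ z := (List.take_append_drop _ x).symm
  have hxlen : x.length = C := length_drop_sub_take hCi hiT
  have hylen : y.length = C - B := by simp only [y, List.length_take]; omega
  have hzlen : z.length = B := by simp only [z, List.length_drop]; omega
  rw [← hz] at hBpal
  rw [hx] at hCpal
  refine ⟨by omega, by omega, ?_, Or.inr (Or.inr ?_)⟩
  · have hdrop : z.drop y.length = (T.take i).drop (i - (B - (C - B))) := by
      rw [hz, hylen, ← drop_sub_drop_sub _ (by omega : B - (C - B) ≤ B) (by omega)]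
      congr 1
      omega
    rw [← hdrop]
    exact hCpal.drop_length hBpal (by omega)
  · -- both lengths are preceded by the last character of `y`, the period of `x`
    have hprec : T[i - (B - (C - B)) - 1]? = T[i - B - 1]? := by
      have hshift := hCpal.getElem?_add_length hBpal (m := C - B - 1) (by omega)
      rw [← hx, hylen, getElem?_drop_sub_take (by omega) hCi,
        getElem?_drop_sub_take (by omega) hCi] at hshift
      rwa [show i - C + (C - B - 1 + (C - B)) = i - (B - (C - B)) - 1 by omega,
        show i - C + (C - B - 1) = i - B - 1 by omega] at hshift
    rwa [hprec]

end Suffixes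

theorem diffs_le_self (s : ℕ → ℕ) (j : ℕ) : diffs s j ≤ s j := by
  cases j <;> simp [diffs]

theorem diffs_of_pos (s : ℕ → ℕ) {j : ℕ} (hj : 0 < j) : diffs s j = s j - s (j - 1) :=
  if_neg hj.ne'

theorem StrictMonoOn.le_apply_pred_of_lt_apply {s : ℕ → ℕ} {g b k : ℕ}
    (hs : StrictMonoOn s (Set.Iio g)) (hk : ∃ m < g, s m = k) (hb : b < g) (hkb : k < s b) :
    0 < b ∧ k ≤ s (b - 1) := by
  obtain ⟨m, hm, rfl⟩ := hk
  have hmb : m < b := (hs.lt_iff_lt hm hb).1 hkb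
  exact ⟨by omega, (hs.le_iff_le hm (Set.mem_Iio.2 (by omega))).2 (by omega)⟩

theorem diffs_add_le_of_reflect_mem {M : Set ℕ} {s : ℕ → ℕ} {g : ℕ}
    (hs : StrictMonoOn s (Set.Iio g)) (hM : ∀ k ∈ M, ∃ m < g, s m = k) (hsM : ∀ m < g, s m ∈ M)
    (hreflect : ∀ B ∈ M, ∀ C ∈ M, B < C → C - B < B → B - (C - B) ∈ M)
    {n : ℕ} (hng : n + 2 < g) (hne : diffs s (n + 2) ≠ diffs s (n + 1)) :
    diffs s (n + 1) + diffs s n ≤ diffs s (n + 2) := by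
  set A := s n
  set B := s (n + 1)
  set C := s (n + 2)
  change C - B ≠ B - A at hne
  change B - A + diffs s n ≤ C - B
  have hAB : A < B := hs (Set.mem_Iio.2 (by omega))
    (Set.mem_Iio.2 (by omega)) (by omega)
  have hBC : B < C := hs (Set.mem_Iio.2 (by omega)) hng (by omega)
  have hreflected (h : C - B < B) : ∃ m < g, s m = B - (C - B) :=
    hM _ (hreflect _ (hsM _ (by omega)) _ (hsM _ hng) hBC h)
  have hgrow : B - A < C - B := by
    by_contra! hle
    have := (hs.le_apply_pred_of_lt_apply (hreflected (by omega)) (by omega)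
      (by omega : _ < B)).2
    simp only [Nat.add_sub_cancel] at this
    omega
  rcases lt_or_ge (C - B) B with hlt | hge
  · obtain ⟨hn, hle⟩ := hs.le_apply_pred_of_lt_apply (hreflected hlt) (by omega)
      (by omega : _ < A)
    rw [diffs_of_pos s hn]
    omega
  · have := diffs_le_self s n
    omega

theorem diffs_fibonacci_growth_general (T : List α) (i : ℕ)
    (hiT : i ≤ T.length) (s : ℕ → ℕ) (g : ℕ)
    (hmono : ∀ j j', j < j' → j' < g → s j < s j')
    (hrange : ∀ k, (∃ j < g, s j = k) ↔ k ∈ MPE T i) :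
    ∀ j, 1 ≤ j → j + 1 < g → diffs s (j + 1) ≠ diffs s j →
      diffs s j + diffs s (j - 1) ≤ diffs s (j + 1) := by
  rintro j hj hjg hne
  obtain ⟨n, rfl⟩ : ∃ n, j = n + 1 := ⟨j - 1, by omega⟩
  exact diffs_add_le_of_reflect_mem (fun a _ b hb hab => hmono a b hab hb)
    (fun k hk => (hrange k).2 hk) (fun m hm => (hrange _).1 ⟨m, hm, rfl⟩)
    (fun B hB C hC => sub_sub_mem_MPE hiT hB hC) hjg hne

/-- If `s 0 < s 1 < … < s (g-1)` enumerates the lengths of all maximal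
palindromes of `T` ending at position `i`, then whenever the difference
sequence strictly changes it satisfies the Fibonacci-like growth
`d (j+1) ≥ d j + d (j-1)` (here `j ≥ 1`, corresponding to `1 < j < g` in
1-indexed notation). -/
theorem diffs_fibonacci_growth (T : List α) (i : ℕ) (hi : 1 ≤ i)
    (hiT : i ≤ T.length) (s : ℕ → ℕ) (g : ℕ)
    (hmono : ∀ j j', j < j' → j' < g → s j < s j')
    (hrange : ∀ k, (∃ j < g, s j = k) ↔ k ∈ MPE T i) :
    ∀ j, 1 ≤ j → j + 1 < g → diffs s (j + 1) ≠ diffs s j →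
      diffs s j + diffs s (j - 1) ≤ diffs s (j + 1) :=
  diffs_fibonacci_growth_general T i hiT s g hmono hrange
end

section
/- If s, s+d, …, s+(t−1)d with t ≥ 2 are lengths of palindromic suffixes of a string T all ending at position i and forming an arithmetic progression arising from consecutive maximal palindromes, then d is a period of each of these palindromic suffixes. -/
variable {α : Type*}

/-- `p` is a period of `S`: `S[k] = S[k+p]` for all valid `k` (0-indexed). -/
def HasPeriod (S : List α) (p : ℕ) : Prop :=
  ∀ k, k + p < S.length → S[k]? = S[k + p]?

/-- The set of lengths of nonempty palindromic suffixes of `X`. -/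
def PalSufLens (X : List α) : Set ℕ :=
  {k | 0 < k ∧ k ≤ X.length ∧ IsPal (X.drop (X.length - k))}

lemma prefix_of_suffix_pal {P Q : List α} (h : P <:+ Q) (hP : IsPal P) (hQ : IsPal Q) :
    P <+: Q := by
  have h2 : P.reverse <+: Q.reverse := List.reverse_prefix.mpr h
  rwa [hP, hQ] at h2

lemma period_of_prefix_suffix {P Q : List α} (hpre : P <+: Q) (hsuf : P <:+ Q) :
    HasPeriod Q (Q.length - P.length) := by
  obtain ⟨u, hu⟩ := hpre
  obtain ⟨r, hr⟩ := hsuf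
  have hlu : P.length + u.length = Q.length := by
    have := congrArg List.length hu; simpa using this
  have hlr : r.length + P.length = Q.length := by
    have := congrArg List.length hr; simpa using this
  intro k hk
  have hk' : k < P.length := by omega
  have h1 : Q[k]? = P[k]? := by
    rw [← hu, List.getElem?_append, if_pos hk']
  have h2 : Q[k + (Q.length - P.length)]? = P[k]? := by
    rw [← hr, List.getElem?_append,
      if_neg (by simp only [List.length_append, not_lt]; omega)]
    congr 1
    simp only [List.length_append]
    omega
  rw [h1, h2]

lemma hasPeriod_drop {Q : List α} {p : ℕ} (h : HasPeriod Q p) (n : ℕ) :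
    HasPeriod (Q.drop n) p := by
  intro k hk
  rw [List.getElem?_drop, List.getElem?_drop,
    show n + (k + p) = (n + k) + p by omega]
  exact h (n + k) (by simp only [List.length_drop] at hk; omega)

/-- If `s, s+d, …, s+(t-1)d` (with `t ≥ 2`) are lengths of palindromic suffixes
of `X`, consecutive in the sorted sequence of all palindromic-suffix lengths
(no palindromic suffix has length strictly between two successive terms), then
`d` is a period of each of these palindromic suffixes. -/
theorem common_difference_is_period (X : List α) (s d t : ℕ)
    (hs : 0 < s) (hd : 0 < d) (ht : 2 ≤ t)
    (hmem : ∀ k < t, s + k * d ∈ PalSufLens X)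
    (hconsec : ∀ k, k + 1 < t → ∀ m ∈ PalSufLens X,
      s + k * d < m → m < s + (k + 1) * d → False) :
    ∀ k < t, HasPeriod (X.drop (X.length - (s + k * d))) d := by
  set L := X.length with hL
  have step : ∀ j, j < t → 0 < j → HasPeriod (X.drop (L - (s + j * d))) d := by
    intro j hjt hj
    obtain ⟨-, hble, hQpal⟩ := hmem j hjt
    obtain ⟨-, hale, hPpal⟩ := hmem (j - 1) (by omega)
    set a := s + (j - 1) * d with ha
    set b := s + j * d with hb
    have hab : a + d = b := by
      have : j - 1 + 1 = j := by omega
      calc a + d = s + ((j-1) * d + d) := by omega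
        _ = s + (j - 1 + 1) * d := by ring_nf
        _ = b := by rw [this]
    set Q := X.drop (L - b) with hQ
    set P := X.drop (L - a) with hP
    have hPQ : P = Q.drop d := by
      rw [hP, hQ, List.drop_drop]
      congr 1
      omega
    have hsuf : P <:+ Q := hPQ ▸ List.drop_suffix d Q
    have hpre : P <+: Q := prefix_of_suffix_pal hsuf hPpal hQpal
    have hQl : Q.length = b := by rw [hQ, List.length_drop]; omega
    have hPl : P.length = a := by rw [hP, List.length_drop]; omega
    have := period_of_prefix_suffix hpre hsuf
    rwa [hQl, hPl, show b - a = d by omega] at this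
  intro k hk
  rcases Nat.eq_zero_or_pos k with rfl | hkpos
  · have h1 : HasPeriod (X.drop (L - (s + 1 * d))) d := step 1 (by omega) one_pos
    have hble : s + 1 * d ≤ L := (hmem 1 (by omega)).2.1
    have := hasPeriod_drop h1 d
    rw [List.drop_drop, show L - (s + 1 * d) + d = L - (s + 0 * d) by omega] at this
    exact this
  · exact step k hk hkpos
end

section
/- If Q is a palindrome and P is a palindromic proper suffix of Q, then P is also a prefix of Q, and |Q| − |P| is a period of Q. -/
/-- If `Q` is a palindrome and `P` is a palindromic proper suffix of `Q`, then
`P` is also a prefix of `Q`, and `|Q| - |P|` is a period of `Q`. -/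
theorem palindromic_proper_suffix_prefix_period {α : Type*} (Q P : List α)
    (hQ : Q.reverse = Q) (hP : P.reverse = P)
    (hsuf : P <:+ Q) (hlt : P.length < Q.length) :
    P <+: Q ∧
    ∀ k, k + (Q.length - P.length) < Q.length →
      Q[k]? = Q[k + (Q.length - P.length)]? := by
  obtain ⟨t, ht⟩ := hsuf
  have hQ2 : Q = P ++ t.reverse := by
    rw [← hQ, ← ht, List.reverse_append, hP]
  have hlen : Q.length = t.length + P.length := by
    rw [← ht, List.length_append]
  have hd : Q.length - P.length = t.length := by omega
  constructor
  · exact ⟨t.reverse, hQ2.symm⟩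
  · intro k hk
    rw [hd] at hk ⊢
    have hkP : k < P.length := by omega
    have h1 : Q[k]? = P[k]? := by
      rw [hQ2, List.getElem?_append_left hkP]
    have h2 : Q[k + t.length]? = P[k]? := by
      rw [← ht, List.getElem?_append_right (by omega)]
      congr 1
      omega
    rw [h1, h2]
end

section
/- In a trie, for every internal node u there is exactly one maximal even-length (possibly empty) palindromic path ending extension centered at u, and for every edge e exactly one maximal odd-length palindrome centered at e. -/
variable {α : Type*}

/-!
A palindrome of radius `m` around a fixed center is forced: the `m` letters below the center
mirror the `m` letters above it, so the only candidate is `mirrorExtend u c m`. These candidates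
are nested, hence by prefix-closedness the radii realized in the trie form an initial segment
`{0, …, M}` of `ℕ`, and the maximal palindrome is the one of radius `M`.
-/

theorem Nat.existsUnique_and_not_succ {P : ℕ → Prop} (hP : Antitone P) (h0 : P 0)
    (hb : ∃ n, ¬ P n) : ∃! m, P m ∧ ¬ P (m + 1) := by
  classical
  have le_of_not_succ {m m'} (hm' : P m') (hm : ¬ P (m + 1)) : m' ≤ m := by
    by_contra! h
    exact hm (hP h hm')
  obtain ⟨m, hm⟩ : ∃ m, Nat.find hb = m + 1 :=
    Nat.exists_eq_succ_of_ne_zero fun h => (h ▸ Nat.find_spec hb) h0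
  have hPm : P m := by_contra fun h => by simpa [hm] using Nat.find_min' hb h
  exact ⟨m, ⟨hPm, hm ▸ Nat.find_spec hb⟩, fun m' ⟨hm', hm's⟩ =>
    le_antisymm (le_of_not_succ hm' (hm ▸ Nat.find_spec hb)) (le_of_not_succ hPm hm's)⟩

theorem isPal_of_length_le_one {l : List α} (h : l.length ≤ 1) : IsPal l := by
  match l, h with
  | [], _ => rfl
  | [_], _ => rfl

theorem isPal_append_append_reverse_iff (x y : List α) :
    IsPal (x ++ y ++ x.reverse) ↔ IsPal y := by
  simp [IsPal]

theorem isPal_append_reverse_take_iff (x : List α) (m : ℕ) :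
    IsPal (x ++ (x.take m).reverse) ↔ IsPal (x.drop m) := by
  simpa using isPal_append_append_reverse_iff (x.take m) (x.drop m)

theorem eq_reverse_take_of_isPal_append {x t : List α} (h : IsPal (x ++ t))
    (ht : t.length ≤ x.length) : t = (x.take t.length).reverse := by
  have := congrArg (List.take t.length) h
  rw [List.reverse_append, List.take_left' List.length_reverse,
    List.take_append_of_le_length ht] at this
  rw [← this, List.reverse_reverse]

theorem length_sufx {v : List α} {k : ℕ} (h : k ≤ v.length) : (sufx v k).length = k := by
  simp only [sufx, List.length_drop]
  omega

theorem sufx_append (u t : List α) {j : ℕ} (hj : j ≤ u.length) :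
    sufx (u ++ t) (j + t.length) = sufx u j ++ t := by
  simp only [sufx, List.length_append]
  rw [show u.length + t.length - (j + t.length) = u.length - j by omega,
    List.drop_append_of_le_length (Nat.sub_le _ _)]

theorem drop_sufx {u : List α} {m c : ℕ} (h : m + c ≤ u.length) :
    (sufx u (m + c)).drop m = sufx u c := by
  simp only [sufx, List.drop_drop]
  congr 1
  omega

theorem noExt_iff_sufx {S : Finset (List α)} {v : List α} {k : ℕ} :
    NoExt S v k ↔
      ∀ a, v ++ [a] ∈ S → k + 1 ≤ v.length → ¬ IsPal (sufx (v ++ [a]) (k + 2)) := by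
  have (a : α) : sufx (v ++ [a]) (k + 2) = (v ++ [a]).drop (v.length - k - 1) := by
    simp only [sufx, List.length_append, List.length_singleton]
    congr 1
    omega
  simp only [NoExt, this]

/-- A palindromic suffix of length `k` of `v`, centered at the node `u` (`c = 0`) or at the edge
entering `u` (`c = 1`). -/
def IsPalAt (u : List α) (c : ℕ) (v : List α) (k : ℕ) : Prop :=
  u <+: v ∧ k = 2 * (v.length - u.length) + c ∧ k ≤ v.length ∧ IsPal (sufx v k)

def mirrorExtend (u : List α) (c m : ℕ) : List α := u ++ ((sufx u (m + c)).take m).reverse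

section MirrorExtend

variable {u : List α} {c m : ℕ}

theorem length_mirrorExtend (h : m + c ≤ u.length) :
    (mirrorExtend u c m).length = u.length + m := by
  simp [mirrorExtend, length_sufx h]

theorem mirrorExtend_succ (h : m + 1 + c ≤ u.length) :
    ∃ a, mirrorExtend u c (m + 1) = mirrorExtend u c m ++ [a] := by
  have hsufx : sufx u (m + 1 + c) = u[u.length - (m + 1 + c)] :: sufx u (m + c) := by
    rw [sufx, List.drop_eq_getElem_cons (by omega), sufx]
    congr 2
    omega
  exact ⟨u[u.length - (m + 1 + c)], by simp [mirrorExtend, hsufx]⟩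

theorem isPalAt_iff (hpal : IsPal (sufx u c)) {v : List α} {k : ℕ} :
    IsPalAt u c v k ↔ ∃ m, m + c ≤ u.length ∧ v = mirrorExtend u c m ∧ k = 2 * m + c := by
  constructor
  · rintro ⟨⟨t, rfl⟩, rfl, hk, hvk⟩
    simp only [List.length_append, Nat.add_sub_cancel_left] at hk hvk ⊢
    have hm : t.length + c ≤ u.length := by omega
    rw [show 2 * t.length + c = t.length + c + t.length by ring, sufx_append u t hm] at hvk
    refine ⟨t.length, hm, ?_, rfl⟩
    rw [mirrorExtend, ← eq_reverse_take_of_isPal_append hvk (by rw [length_sufx hm]; omega)]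
  · rintro ⟨m, hm, rfl, rfl⟩
    have hlen := length_mirrorExtend hm
    refine ⟨List.prefix_append _ _, by omega, by omega, ?_⟩
    have hr : ((sufx u (m + c)).take m).reverse.length = m := by
      simp [length_sufx hm]
    rw [mirrorExtend, show 2 * m + c = m + c + ((sufx u (m + c)).take m).reverse.length by omega,
      sufx_append u _ hm, isPal_append_reverse_take_iff, drop_sufx hm]
    exact hpal

end MirrorExtend

section Center

variable {S : Finset (List α)} {u : List α} {c : ℕ}

def HasPalOfRadius (S : Finset (List α)) (u : List α) (c m : ℕ) : Prop :=
  m + c ≤ u.length ∧ mirrorExtend u c m ∈ S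

theorem hasPalOfRadius_antitone (hpc : PrefixClosed S) : Antitone (HasPalOfRadius S u c) :=
  antitone_nat_of_succ_le fun m ⟨hm, hS⟩ => by
    obtain ⟨a, ha⟩ := mirrorExtend_succ hm
    exact ⟨by omega, hpc _ hS _ (ha ▸ List.prefix_append _ _)⟩

theorem noExt_mirrorExtend_iff (hpal : IsPal (sufx u c)) {m : ℕ} (hm : m + c ≤ u.length) :
    NoExt S (mirrorExtend u c m) (2 * m + c) ↔ ¬ HasPalOfRadius S u c (m + 1) := by
  have hlen := length_mirrorExtend hm
  rw [noExt_iff_sufx]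
  constructor
  · rintro hne ⟨hm1, hS⟩
    obtain ⟨a, ha⟩ := mirrorExtend_succ hm1
    obtain ⟨-, -, -, hpal'⟩ :=
      (isPalAt_iff (k := 2 * m + c + 2) hpal).2 ⟨m + 1, hm1, ha.symm, by ring⟩
    exact hne a (ha ▸ hS) (by omega) hpal'
  · intro hmax a hS hk hpal'
    have hpre : u <+: mirrorExtend u c m ++ [a] :=
      (List.prefix_append _ _).trans (List.prefix_append _ _)
    obtain ⟨m', hm', he, hk'⟩ := (isPalAt_iff hpal).1
      ⟨hpre, by simp only [List.length_append, List.length_singleton]; omega,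
        by simp only [List.length_append, List.length_singleton]; omega, hpal'⟩
    obtain rfl : m' = m + 1 := by omega
    exact hmax ⟨hm', he ▸ hS⟩

theorem maximalPal_iff (hpal : IsPal (sufx u c)) {p : List α × ℕ} :
    (p.1 ∈ S ∧ u <+: p.1 ∧ p.2 = 2 * (p.1.length - u.length) + c ∧ p.2 ≤ p.1.length ∧
      IsPal (sufx p.1 p.2) ∧ NoExt S p.1 p.2) ↔
    ∃ m, p = (mirrorExtend u c m, 2 * m + c) ∧
      HasPalOfRadius S u c m ∧ ¬ HasPalOfRadius S u c (m + 1) := by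
  obtain ⟨v, k⟩ := p
  constructor
  · rintro ⟨hv, hpre, hk, hkl, hvk, hne⟩
    obtain ⟨m, hm, rfl, rfl⟩ := (isPalAt_iff hpal).1 ⟨hpre, hk, hkl, hvk⟩
    exact ⟨m, rfl, ⟨hm, hv⟩, (noExt_mirrorExtend_iff hpal hm).1 hne⟩
  · rintro ⟨m, hp, ⟨hm, hv⟩, hmax⟩
    obtain ⟨rfl, rfl⟩ := Prod.mk.inj hp
    obtain ⟨hpre, hk, hkl, hvk⟩ := (isPalAt_iff hpal).2 ⟨m, hm, rfl, rfl⟩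
    exact ⟨hv, hpre, hk, hkl, hvk, (noExt_mirrorExtend_iff hpal hm).2 hmax⟩

theorem existsUnique_maximalPal (hpc : PrefixClosed S) (hu : u ∈ S) (hc : c ≤ u.length)
    (hpal : IsPal (sufx u c)) :
    ∃! p : List α × ℕ, p.1 ∈ S ∧ u <+: p.1 ∧ p.2 = 2 * (p.1.length - u.length) + c ∧
      p.2 ≤ p.1.length ∧ IsPal (sufx p.1 p.2) ∧ NoExt S p.1 p.2 := by
  simp_rw [maximalPal_iff hpal]
  obtain ⟨m, hm, hm_unique⟩ := Nat.existsUnique_and_not_succ (hasPalOfRadius_antitone hpc)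
    ⟨by simpa using hc, by simpa [mirrorExtend] using hu⟩
    ⟨u.length + 1, fun h => absurd h.1 (by omega)⟩
  refine ⟨_, ⟨m, rfl, hm⟩, ?_⟩
  rintro _ ⟨m', rfl, hm'⟩
  rw [hm_unique m' hm']

end Center

/-- An edge is represented by its lower endpoint `w`. -/
theorem unique_maximal_palindrome_per_center_general (S : Finset (List α))
    (hpc : PrefixClosed S) :
    (∀ u ∈ S, (∃ a, u ++ [a] ∈ S) →
      ∃! p : List α × ℕ, p.1 ∈ S ∧ u <+: p.1 ∧
        p.2 = 2 * (p.1.length - u.length) ∧ p.2 ≤ p.1.length ∧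
        IsPal (sufx p.1 p.2) ∧ NoExt S p.1 p.2) ∧
    (∀ w ∈ S, w ≠ [] →
      ∃! p : List α × ℕ, p.1 ∈ S ∧ w <+: p.1 ∧
        p.2 = 2 * (p.1.length - w.length) + 1 ∧ p.2 ≤ p.1.length ∧
        IsPal (sufx p.1 p.2) ∧ NoExt S p.1 p.2) := by
  refine ⟨fun u hu _ => ?_, fun w hw hw0 => ?_⟩
  · exact existsUnique_maximalPal hpc hu (Nat.zero_le _)
      (isPal_of_length_le_one (by simp [sufx]))
  · exact existsUnique_maximalPal hpc hw (List.length_pos_iff.mpr hw0)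
      (isPal_of_length_le_one (by simp [sufx]; omega))

/-- In a trie, for every internal node `u` there is exactly one maximal
even-length (possibly empty) palindrome centered at `u` (an occurrence `(v,k)`
with `u` an ancestor of `v` at half-depth: `k = 2(|v| - |u|)`), and for every
edge (identified with its lower endpoint `w ≠ root`) exactly one maximal
odd-length palindrome centered at that edge (`k = 2(|v| - |w|) + 1`). -/
theorem unique_maximal_palindrome_per_center (S : Finset (List α))
    (hroot : ([] : List α) ∈ S) (hpc : PrefixClosed S) :
    (∀ u ∈ S, (∃ a, u ++ [a] ∈ S) →
      ∃! p : List α × ℕ, p.1 ∈ S ∧ u <+: p.1 ∧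
        p.2 = 2 * (p.1.length - u.length) ∧ p.2 ≤ p.1.length ∧
        IsPal (sufx p.1 p.2) ∧ NoExt S p.1 p.2) ∧
    (∀ w ∈ S, w ≠ [] →
      ∃! p : List α × ℕ, p.1 ∈ S ∧ w <+: p.1 ∧
        p.2 = 2 * (p.1.length - w.length) + 1 ∧ p.2 ≤ p.1.length ∧
        IsPal (sufx p.1 p.2) ∧ NoExt S p.1 p.2) :=
  unique_maximal_palindrome_per_center_general S hpc
end

section
/- Let ST be the suffix tree of a backward trie T. For any character c and any pair of suffix-tree nodes u, v with str(v) = c · str(u), the subtree of ST rooted at v is isomorphic to the graph obtained from the subtree rooted at u by restricting to the nodes marked by c and contracting all unmarked nodes. -/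
variable {α : Type*}

/-- The suffixes of the backward trie `S` (a trie given by its prefix-closed
set of forward root-to-node path strings): the reversed path strings. -/
def Sufs (S : Finset (List α)) : Set (List α) := {Y | ∃ w ∈ S, w.reverse = Y}

/-- `W` is the path string of a node of the suffix tree (the compacted trie of
the suffixes of the backward trie): the root, a leaf (a whole suffix), or a
branching word (a common prefix of suffixes with two distinct one-character
extensions occurring). -/
def IsNodeStr (S : Finset (List α)) (W : List α) : Prop :=
  W = [] ∨ W ∈ Sufs S ∨
    ∃ a b, a ≠ b ∧ (∃ Y ∈ Sufs S, W ++ [a] <+: Y) ∧ (∃ Y ∈ Sufs S, W ++ [b] <+: Y)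

/-- A suffix-tree node `W` is marked by `c` if there is a suffix-tree node with
path string `c · W`. -/
def Marked (S : Finset (List α)) (c : α) (W : List α) : Prop :=
  IsNodeStr S (c :: W)

lemma sufs_tail {S : Finset (List α)} (hpc : PrefixClosed S) {c : α} {W : List α}
    (h : (c :: W) ∈ Sufs S) : W ∈ Sufs S := by
  obtain ⟨w, hw, hrev⟩ := h
  have hw' : w = W.reverse ++ [c] := by
    have := congrArg List.reverse hrev
    simpa using this
  exact ⟨W.reverse, hpc w hw W.reverse (hw' ▸ ⟨[c], rfl⟩), by simp⟩

lemma prefix_sufs_tail {S : Finset (List α)} (hpc : PrefixClosed S) {c : α} {Z Y : List α}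
    (hY : Y ∈ Sufs S) (h : (c :: Z) <+: Y) : ∃ Y' ∈ Sufs S, Z <+: Y' := by
  obtain ⟨t, ht⟩ := h
  have : Y = c :: (Z ++ t) := by simpa using ht.symm
  exact ⟨Z ++ t, sufs_tail hpc (this ▸ hY), ⟨t, rfl⟩⟩

lemma node_of_cons {S : Finset (List α)} (hpc : PrefixClosed S) {c : α} {W : List α}
    (h : IsNodeStr S (c :: W)) : IsNodeStr S W := by
  rcases h with h | h | ⟨a, b, hab, ⟨Y₁, hY₁, hp₁⟩, ⟨Y₂, hY₂, hp₂⟩⟩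
  · simp at h
  · exact Or.inr (Or.inl (sufs_tail hpc h))
  · refine Or.inr (Or.inr ⟨a, b, hab, ?_, ?_⟩)
    · obtain ⟨Y', hY', hp⟩ := prefix_sufs_tail hpc hY₁ (by simpa using hp₁)
      exact ⟨Y', hY', hp⟩
    · obtain ⟨Y', hY', hp⟩ := prefix_sufs_tail hpc hY₂ (by simpa using hp₂)
      exact ⟨Y', hY', hp⟩

/-- Suffix tree of a backward trie: if `str(v) = c · str(u)` for suffix-tree
nodes `u, v`, then the subtree rooted at `v` is isomorphic to the subtree
rooted at `u` restricted to the nodes marked by `c` with unmarked nodes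
contracted: the map `W ↦ c :: W` is a bijection from the `c`-marked nodes of
the subtree of `u` onto the nodes of the subtree of `v`, and it preserves the
(compacted-trie) ancestor-descendant structure, i.e. the prefix order. -/
theorem subtree_isomorphism_marked_contraction (S : Finset (List α))
    (hroot : ([] : List α) ∈ S) (hpc : PrefixClosed S)
    (dollar : α)
    (hdollar : ∀ w ∈ S, ∀ (a : α) (t : List α), w = a :: t → a = dollar ∧ dollar ∉ t)
    (c : α) (U V : List α)
    (hU : IsNodeStr S U) (hV : IsNodeStr S V) (hUV : V = c :: U) :
    Set.BijOn (fun W => c :: W)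
      {W | IsNodeStr S W ∧ U <+: W ∧ Marked S c W}
      {X | IsNodeStr S X ∧ V <+: X} ∧
    ∀ W₁ W₂ : List α,
      (IsNodeStr S W₁ ∧ U <+: W₁ ∧ Marked S c W₁) →
      (IsNodeStr S W₂ ∧ U <+: W₂ ∧ Marked S c W₂) →
      (W₁ <+: W₂ ↔ (c :: W₁) <+: (c :: W₂)) := by
  subst hUV
  refine ⟨⟨?_, ?_, ?_⟩, ?_⟩
  · rintro W ⟨hW, hUW, hM⟩
    exact ⟨hM, List.cons_prefix_cons.mpr ⟨rfl, hUW⟩⟩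
  · rintro W₁ - W₂ - h
    exact (List.cons.injEq _ _ _ _ ▸ h).2
  · rintro X ⟨hX, hVX⟩
    obtain ⟨t, rfl⟩ := hVX
    exact ⟨U ++ t, ⟨node_of_cons hpc hX, ⟨t, rfl⟩, hX⟩, rfl⟩
  · intro W₁ W₂ _ _
    exact ⟨fun h => List.cons_prefix_cons.mpr ⟨rfl, h⟩,
      fun h => (List.cons_prefix_cons.mp h).2⟩
end

section
/- Let ST be the suffix tree of a backward trie and let u, v be ST nodes with str(v) = c · str(u). Then a leaf y lies in the subtree of u and is marked by c if and only if the unique leaf x with str(x) = c · str(y) lies in the subtree of v; this gives a bijection between the c-marked leaves under u and all leaves under v. -/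
variable {α : Type*}

/-- Let `u, v` be suffix-tree nodes of a backward trie with
`str(v) = c · str(u)`.  A leaf `y` (a suffix `Y`) lies in the subtree of `u`
(`str(u) <+: Y`) and is marked by `c` (`c :: Y` is also a suffix) if and only
if the unique leaf with string `c :: Y` lies in the subtree of `v`; this gives
a bijection `Y ↦ c :: Y` between the `c`-marked leaves under `u` and all
leaves under `v`. -/
theorem marked_leaf_bijection (S : Finset (List α))
    (hroot : ([] : List α) ∈ S) (hpc : PrefixClosed S)
    (dollar : α)
    (hdollar : ∀ w ∈ S, ∀ (a : α) (t : List α), w = a :: t → a = dollar ∧ dollar ∉ t)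
    (c : α) (U : List α)
    (hU : IsNodeStr S U) (hV : IsNodeStr S (c :: U)) :
    (∀ Y ∈ Sufs S,
      ((U <+: Y ∧ (c :: Y) ∈ Sufs S) ↔ ((c :: Y) ∈ Sufs S ∧ (c :: U) <+: (c :: Y)))) ∧
    Set.BijOn (fun Y => c :: Y)
      {Y | Y ∈ Sufs S ∧ U <+: Y ∧ (c :: Y) ∈ Sufs S}
      {X | X ∈ Sufs S ∧ (c :: U) <+: X} := by
  constructor
  · intro Y _
    constructor
    · rintro ⟨h1, h2⟩
      exact ⟨h2, List.cons_prefix_cons.mpr ⟨rfl, h1⟩⟩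
    · rintro ⟨h1, h2⟩
      exact ⟨(List.cons_prefix_cons.mp h2).2, h1⟩
  · refine ⟨fun Y hY => ?_, fun Y _ Y' _ h => by simpa using h, fun X hX => ?_⟩
    · exact ⟨hY.2.2, List.cons_prefix_cons.mpr ⟨rfl, hY.2.1⟩⟩
    · obtain ⟨⟨w, hw, hwr⟩, hpre⟩ := hX
      obtain ⟨t, ht⟩ := hpre
      cases X with
      | nil => simp at ht
      | cons a Y =>
        obtain ⟨rfl, hUY⟩ := List.cons_prefix_cons.mp ⟨t, ht⟩
        refine ⟨Y, ⟨⟨Y.reverse, ?_, by simp⟩, hUY, ⟨w, hw, hwr⟩⟩, rfl⟩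
        have : Y.reverse <+: w := by
          have : w = Y.reverse ++ [c] := by
            have := congrArg List.reverse hwr
            simpa using this
          exact ⟨[c], this.symm⟩
        exact hpc w hw _ this
end

section
/- In a trie T, let x be a leaf whose corresponding path string is S, and let P = LPS(S) be the longest palindromic suffix of S. If P occurs in T somewhere other than as a suffix of S, and P is the longest palindromic suffix of only one root-to-node path string in T (i.e., there is exactly one trie node whose path string has P as its longest palindromic suffix), then P is a proper suffix of the longest palindromic suffix of some other path string, i.e., P is not a leaf in the palindromic (EERTREE) tree. Contrapositive form: if P is a leaf of the EERTREE of T and exactly one trie node's longest palindromic suffix equals P, then the only occurrence of P in T is as a suffix of S. -/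
variable {α : Type*}

/-- Correctness of the EERTREE leaf-deletion procedure (contrapositive form):
let `X` be the path string of a leaf of the trie and `P = LPS(X)` its longest
palindromic suffix.  If `P` is a leaf of the EERTREE (no palindrome `a·P·a`
occurs in the trie) and exactly one trie node's longest palindromic suffix
equals `P`, then the only occurrence of `P` in the trie is as a suffix of `X`. -/
theorem eertree_leaf_deletion_correctness (S : Finset (List α))
    (hroot : ([] : List α) ∈ S) (hpc : PrefixClosed S)
    (X : List α) (hX : X ∈ S) (hleaf : ∀ a, X ++ [a] ∉ S)
    (P : List α) (hPsuf : P <:+ X) (hPpal : IsPal P)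
    (hPlong : ∀ Q : List α, Q <:+ X → IsPal Q → Q.length ≤ P.length)
    (hEleaf : ∀ a : α, ¬ ∃ v ∈ S, (a :: (P ++ [a])) <:+ v)
    (hUniq : ∀ v ∈ S,
      (P <:+ v ∧ ∀ Q : List α, Q <:+ v → IsPal Q → Q.length ≤ P.length) → v = X) :
    ∀ v ∈ S, P <:+ v → v = X := by
  have key : ∀ n : ℕ, ∀ v ∈ S, v.length = n → P <:+ v → v = X := by
    intro n
    induction n using Nat.strong_induction_on with
    | _ n ih =>
      intro v hv hlen hsuf
      by_contra hne
      -- since v ≠ X, the LPS of v is strictly longer than P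
      have h1 : ¬ (P <:+ v ∧ ∀ Q : List α, Q <:+ v → IsPal Q → Q.length ≤ P.length) :=
        fun h => hne (hUniq v hv h)
      push_neg at h1
      obtain ⟨Q, hQv, hQpal, hQlen⟩ := h1 hsuf
      -- P is a suffix of Q
      have hPQ : P <:+ Q := List.suffix_of_suffix_length_le hsuf hQv hQlen.le
      -- by palindromy, P is a prefix of Q
      have hPQpre : P <+: Q := by
        rw [← List.reverse_suffix, hPpal, hQpal]
        exact hPQ
      obtain ⟨z, hz⟩ := hQv
      obtain ⟨t, ht⟩ := hPQpre
      -- t is nonempty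
      obtain ⟨a, t', rfl⟩ : ∃ a t', t = a :: t' := by
        cases t with
        | nil =>
          exfalso
          simp only [List.append_nil] at ht
          rw [← ht] at hQlen
          exact lt_irrefl _ hQlen
        | cons a t' => exact ⟨a, t', rfl⟩
      -- the node z ++ P is in S, shorter than v, and ends with P
      have hvEq : (z ++ P) ++ (a :: t') = v := by
        rw [← hz, ← ht]; simp
      have hw : z ++ P ∈ S := hpc v hv (z ++ P) ⟨a :: t', hvEq⟩
      have hwa : (z ++ P) ++ [a] ∈ S := hpc v hv ((z ++ P) ++ [a]) ⟨t', by
        rw [← hvEq]; simp⟩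
      have hwlen : (z ++ P).length < n := by
        have : Q.length = P.length + (a :: t').length := by rw [← ht]; simp
        have hv' : v.length = z.length + Q.length := by rw [← hz]; simp
        simp only [List.length_append] at *
        omega
      have hwX : z ++ P = X := ih _ hwlen (z ++ P) hw rfl (List.suffix_append z P)
      exact hleaf a (hwX ▸ hwa)
  intro v hv hsuf
  exact key v.length v hv rfl hsuf
end

section
/- For any string x ending with suffix a·slink(x) for character a (where slink(x) is the longest proper palindromic suffix of x), and any character c: the longest proper palindromic suffix of x preceded by c equals slink(x) if c = a, and equals the longest proper palindromic suffix of slink(x) preceded by c otherwise. -/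
variable {α : Type*}

private lemma suffix_of_suffix_length_le' {l₁ l₂ l₃ : List α}
    (h1 : l₁ <:+ l₃) (h2 : l₂ <:+ l₃) (h : l₁.length ≤ l₂.length) : l₁ <:+ l₂ := by
  rw [← List.reverse_prefix] at h1 h2 ⊢
  exact List.prefix_of_prefix_length_le h1 h2 (by simpa using h)

/-- Recurrence for direct links: let `sx = slink(x)` be the longest proper
palindromic suffix of `x`, and suppose `x` ends with `a · sx`.  Then for any
character `c`, the longest proper palindromic suffix of `x` preceded by `c`
(i.e. `dlink(x, c)`) equals `sx` if `c = a`; and if `c ≠ a`, a string `y`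
satisfies the `dlink(x, c)` specification iff it satisfies the
`dlink(slink(x), c)` specification. -/
theorem dlink_recurrence (x sx : List α) (a : α)
    (hsuf : sx <:+ x) (hpal : IsPal sx) (hlt : sx.length < x.length)
    (hmax : ∀ Q : List α, Q <:+ x → IsPal Q → Q.length < x.length →
      Q.length ≤ sx.length)
    (hprec : (a :: sx) <:+ x) (c : α) :
    (c = a →
      ((c :: sx) <:+ x ∧ IsPal sx ∧ sx.length < x.length ∧
        ∀ z : List α, (c :: z) <:+ x → IsPal z → z.length < x.length →
          z.length ≤ sx.length)) ∧
    (c ≠ a → ∀ y : List α,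
      ((c :: y) <:+ x ∧ IsPal y ∧ y.length < x.length ∧
        ∀ z : List α, (c :: z) <:+ x → IsPal z → z.length < x.length →
          z.length ≤ y.length)
      ↔
      ((c :: y) <:+ sx ∧ IsPal y ∧ y.length < sx.length ∧
        ∀ z : List α, (c :: z) <:+ sx → IsPal z → z.length < sx.length →
          z.length ≤ y.length)) := by
  -- Key: if `c ≠ a` and `(c :: z) <:+ x` with `z` a palindrome shorter than `x`,
  -- then `(c :: z) <:+ sx` (and in particular `z.length < sx.length`).
  have key : ∀ z : List α, c ≠ a → (c :: z) <:+ x → IsPal z → z.length < x.length →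
      (c :: z) <:+ sx := by
    intro z hne hz hzp hzl
    have hzle : z.length ≤ sx.length := hmax z ((List.suffix_cons c z).trans hz) hzp hzl
    have hzlt : z.length < sx.length := by
      rcases lt_or_eq_of_le hzle with h | h
      · exact h
      · exfalso
        have : (c :: z) = (a :: sx) := by
          have h1 : (c :: z) <:+ (a :: sx) :=
            suffix_of_suffix_length_le' hz hprec (by simp [h])
          exact h1.eq_of_length (by simp [h])
        exact hne (by injection this)
    exact suffix_of_suffix_length_le' hz hsuf (by simpa using hzlt)
  constructor
  · intro hc
    subst hc
    exact ⟨hprec, hpal, hlt, fun z hz hzp hzl => hmax z ((List.suffix_cons c z).trans hz) hzp hzl⟩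
  · intro hne y
    constructor
    · rintro ⟨hy, hyp, hyl, hym⟩
      have hys : (c :: y) <:+ sx := key y hne hy hyp hyl
      have hylt : y.length < sx.length := by
        have := hys.length_le; simpa using this
      refine ⟨hys, hyp, hylt, fun z hz hzp hzl => ?_⟩
      exact hym z (hz.trans hsuf) hzp (hzl.trans hlt)
    · rintro ⟨hy, hyp, hyl, hym⟩
      refine ⟨hy.trans hsuf, hyp, hyl.trans hlt, fun z hz hzp hzl => ?_⟩
      have hzs : (c :: z) <:+ sx := key z hne hz hzp hzl
      have hzlt : z.length < sx.length := by
        have := hzs.length_le; simpa using this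
      exact hym z hzs hzp hzlt
end

section
/- In the suffix tree of a backward trie, for a newly inserted leaf v corresponding to the trie node with path string S, the string depth of the parent of v equals the length of the longest suffix of S that occurs elsewhere in the trie as a suffix of another node's path string; consequently, the longest palindromic suffix P of S is new (does not occur elsewhere ending at an already-present node) if and only if |P| exceeds the string depth of the parent of v. -/
variable {α : Type*}

lemma suffix_eq_drop {Q w : List α} (h : Q <:+ w) :
    Q = w.drop (w.length - Q.length) := by
  obtain ⟨t, rfl⟩ := h
  simp [List.drop_left']

/-- In the suffix tree of a backward trie, the string depth `D` of the parent
of the leaf of a node with path string `w` is the length of the longest suffix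
of `w` shared with another node's path string (this is the defining property of
`D` hypothesized below).  Then a suffix `Q` of `w` occurs as a suffix of
another node's path string iff `|Q| ≤ D`; consequently the longest palindromic
suffix `P` of `w` is new (occurs only as a suffix of `w`) iff `|P| > D`. -/
theorem parent_string_depth_characterizes_new_palindrome (S : Finset (List α))
    (hroot : ([] : List α) ∈ S) (hpc : PrefixClosed S)
    (w : List α) (hw : w ∈ S)
    (D : ℕ) (hD : D ≤ w.length)
    (hDex : ∃ w' ∈ S, w' ≠ w ∧ sufx w D <:+ w')
    (hDmax : ∀ k ≤ w.length, (∃ w' ∈ S, w' ≠ w ∧ sufx w k <:+ w') → k ≤ D) :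
    (∀ Q : List α, Q <:+ w →
      ((∃ w' ∈ S, w' ≠ w ∧ Q <:+ w') ↔ Q.length ≤ D)) ∧
    (∀ P : List α, P <:+ w → IsPal P →
      (∀ Q : List α, Q <:+ w → IsPal Q → Q.length ≤ P.length) →
      ((∀ v ∈ S, P <:+ v → v = w) ↔ D < P.length)) := by
  have part1 : ∀ Q : List α, Q <:+ w →
      ((∃ w' ∈ S, w' ≠ w ∧ Q <:+ w') ↔ Q.length ≤ D) := by
    intro Q hQ
    constructor
    · intro hex
      have hlen : Q.length ≤ w.length := hQ.length_le
      exact hDmax Q.length hlen (by rw [sufx, ← suffix_eq_drop hQ]; exact hex)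
    · intro hle
      obtain ⟨w', hw', hne, hsuf⟩ := hDex
      refine ⟨w', hw', hne, ?_⟩
      have hQsub : Q <:+ sufx w D := by
        have hlen : Q.length ≤ w.length := hQ.length_le
        rw [sufx, suffix_eq_drop hQ,
          show w.length - Q.length = (w.length - D) + (D - Q.length) from by omega,
          ← List.drop_drop]
        exact List.drop_suffix _ _
      exact hQsub.trans hsuf
  refine ⟨part1, ?_⟩
  intro P hP _ _
  constructor
  · intro hnew
    by_contra hle
    push_neg at hle
    obtain ⟨w', hw', hne, hsuf⟩ := (part1 P hP).mpr hle
    exact hne (hnew w' hw' hsuf)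
  · intro hlt v hv hPv
    by_contra hne
    have := (part1 P hP).mp ⟨v, hv, hne, hPv⟩
    omega
end
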